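/- Let n ≥ 1 be an integer and κ_s, κ_o, κ_d reals with κ_d ≥ 0, κ_o ≥ κ_d, and κ_s − κ_d ≥ 2(κ_o − κ_d). Let K be the matrix indexed by ordered pairs (j,k) with j, k ∈ {1,…,n} defined by K_{(j,k),(j',k')} = κ_s if (j,k) = (j',k'), K_{(j,k),(j',k')} = κ_o if exactly one of j = j', k = k' holds, and K_{(j,k),(j',k')} = κ_d otherwise. Then K = Z·Zᵀ, where Z is the matrix whose row indexed by (j,k) is the concatenation (s₁·e_j, s₁·e_k, s₂·e_{(j,k)}, s₀) with e_j ∈ ℝⁿ and e_{(j,k)} ∈ ℝ^{n²} standard basis vectors, s₀ := √κ_d, s₁ := √(κ_o − κ_d), s₂ := √(κ_s − κ_d − 2(κ_o − κ_d)). In particular, every such exchangeable kernel matrix K is positive semidefinite. -/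

import Mathlib

open Matrix

noncomputable section

/-- The exchangeable kernel matrix on all ordered pairs of `n` items. -/
def Kex (n : ℕ) (κs κo κd : ℝ) : Matrix (Fin n × Fin n) (Fin n × Fin n) ℝ :=
  fun u u' =>
    if u = u' then κs else if u.1 = u'.1 ∨ u.2 = u'.2 then κo else κd

/-- The four-hot encoding: compositional populations scaled by `s₁ = √(κₒ−κ_d)`,
conjunctive population scaled by `s₂ = √(κₛ−κ_d−2(κₒ−κ_d))`, and a constant bias
unit `s₀ = √κ_d`. -/
def Zfourhot (n : ℕ) (κs κo κd : ℝ) :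
    Matrix (Fin n × Fin n) (Fin n ⊕ Fin n ⊕ (Fin n × Fin n) ⊕ Unit) ℝ :=
  fun u v =>
    match v with
    | Sum.inl i => Real.sqrt (κo - κd) * (if i = u.1 then 1 else 0)
    | Sum.inr (Sum.inl i) => Real.sqrt (κo - κd) * (if i = u.2 then 1 else 0)
    | Sum.inr (Sum.inr (Sum.inl w)) =>
        Real.sqrt (κs - κd - 2 * (κo - κd)) * (if w = u then 1 else 0)
    | Sum.inr (Sum.inr (Sum.inr _)) => Real.sqrt κd

/-! Both `Kex` and `Z * Zᵀ` equal
`(κo - κd) [j = j'] + (κo - κd) [k = k'] + (κs - κd - 2 (κo - κd)) [(j, k) = (j', k')] + κd`: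
each one-hot block of `Z` contributes the square of its scale times one indicator, and the
bias unit the constant. Positive semidefiniteness follows because `Z * Zᵀ` is a Gram matrix. -/

theorem sum_scaled_indicator_mul {ι R : Type*} [Fintype ι] [DecidableEq ι] [CommSemiring R]
    (c : R) (a b : ι) :
    ∑ i, (c * if i = a then 1 else 0) * (c * if i = b then 1 else 0) =
      c * c * if a = b then 1 else 0 := by
  simp only [mul_ite, mul_one, mul_zero, ite_mul, zero_mul, Finset.sum_ite_eq', Finset.mem_univ,
    if_true]
  rcases eq_or_ne a b with rfl | hab
  · simp
  · simp [hab, hab.symm]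

theorem Kex_apply_eq (n : ℕ) (κs κo κd : ℝ) (u u' : Fin n × Fin n) :
    Kex n κs κo κd u u' =
      (κo - κd) * (if u.1 = u'.1 then 1 else 0) + (κo - κd) * (if u.2 = u'.2 then 1 else 0) +
        (κs - κd - 2 * (κo - κd)) * (if u = u' then 1 else 0) + κd := by
  rcases eq_or_ne u u' with rfl | huu
  · simp only [Kex, if_true]; ring
  · have huu' : ¬(u.1 = u'.1 ∧ u.2 = u'.2) := fun h => huu (Prod.ext h.1 h.2)
    by_cases h1 : u.1 = u'.1 <;> by_cases h2 : u.2 = u'.2 <;> simp_all [Kex]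

theorem Zfourhot_mul_transpose_apply (n : ℕ) {κs κo κd : ℝ}
    (hκd : 0 ≤ κd) (hκo : κd ≤ κo) (hκs : 2 * (κo - κd) ≤ κs - κd) (u u' : Fin n × Fin n) :
    (Zfourhot n κs κo κd * (Zfourhot n κs κo κd)ᵀ) u u' =
      (κo - κd) * (if u.1 = u'.1 then 1 else 0) + (κo - κd) * (if u.2 = u'.2 then 1 else 0) +
        (κs - κd - 2 * (κo - κd)) * (if u = u' then 1 else 0) + κd := by
  simp only [mul_apply, transpose_apply, Fintype.sum_sum_type, Zfourhot,
    sum_scaled_indicator_mul, Finset.univ_unique, Finset.sum_singleton,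
    Real.mul_self_sqrt hκd, Real.mul_self_sqrt (sub_nonneg.2 hκo),
    Real.mul_self_sqrt (sub_nonneg.2 hκs)]
  ring

theorem exchangeable_kernel_factorization_general
    (n : ℕ) (κs κo κd : ℝ)
    (hκd : 0 ≤ κd) (hκo : κd ≤ κo) (hκs : 2 * (κo - κd) ≤ κs - κd) :
    Kex n κs κo κd = Zfourhot n κs κo κd * (Zfourhot n κs κo κd)ᵀ ∧
      (Kex n κs κo κd).PosSemidef := by
  have hfac : Kex n κs κo κd = Zfourhot n κs κo κd * (Zfourhot n κs κo κd)ᵀ := by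
    ext u u'
    rw [Kex_apply_eq, Zfourhot_mul_transpose_apply n hκd hκo hκs]
  refine ⟨hfac, ?_⟩
  rw [hfac]
  exact posSemidef_self_mul_conjTranspose _

/-- Every exchangeable kernel matrix factors as `Z·Zᵀ` through the four-hot
encoding; in particular it is positive semidefinite. -/
theorem exchangeable_kernel_factorization
    (n : ℕ) (hn : 1 ≤ n) (κs κo κd : ℝ)
    (hκd : 0 ≤ κd) (hκo : κd ≤ κo) (hκs : 2 * (κo - κd) ≤ κs - κd) :
    Kex n κs κo κd = Zfourhot n κs κo κd * (Zfourhot n κs κo κd)ᵀ ∧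
      (Kex n κs κo κd).PosSemidef :=
  exchangeable_kernel_factorization_general n κs κo κd hκd hκo hκs
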